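/- arXiv:1711.04095 — 7 statements merged into one kernel-verified Lean document; each statement's English description precedes it below -/
import Mathlib

section
/- Let f(x) = x^4 + a x^2 + b x + c be a real quartic with all roots real. Then all six roots of g(x) = x^6 + 8a x^4 + 16(a^2 - 4c) x^2 - 64 b^2 are real; namely the roots of g are exactly 2(xi + xj) over the six unordered pairs {i,j} of indices of roots of f. -/
/-! Comparing coefficients gives Vieta's formulas, with `x 0 + x 1 + x 2 + x 3 = 0` since the cubic
coefficient vanishes. Hence the six pair sums come in opposite pairs `x i + x j = -(x k + x l)`, and
the product of the `t - 2 (x i + x j)` is a cubic in `t ^ 2`, namely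
`(t ^ 2 - 4 s₁ ^ 2) (t ^ 2 - 4 s₂ ^ 2) (t ^ 2 - 4 s₃ ^ 2)` with `s_k = x 0 + x k`; expressing its
symmetric coefficients through `a`, `b`, `c` gives `g`. -/

theorem prod_sub_two_mul_pair_sums {R : Type*} [CommRing R] (x : Fin 4 → R)
    (hx : x 0 + x 1 + x 2 + x 3 = 0) (t : R) :
    ∏ p ∈ Finset.univ.filter (fun p : Fin 4 × Fin 4 => p.1 < p.2), (t - 2 * (x p.1 + x p.2))
      = (t ^ 2 - 4 * (x 0 + x 1) ^ 2) * (t ^ 2 - 4 * (x 0 + x 2) ^ 2)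
          * (t ^ 2 - 4 * (x 0 + x 3) ^ 2) := by
  have hx3 : x 3 = -(x 0 + x 1 + x 2) := by linear_combination hx
  simp only [Finset.prod_filter, Fintype.prod_prod_type, Fin.prod_univ_four, Fin.reduceLT,
    ↓reduceIte, mul_one, one_mul, hx3]
  ring

theorem setOf_prod_sub_eq_zero {ι R : Type*} [CommRing R] [IsDomain R] (s : Finset ι)
    (f : ι → R) : {t : R | ∏ i ∈ s, (t - f i) = 0} = f '' s := by
  ext t
  simp only [Set.mem_ofPred_eq, Finset.prod_eq_zero_iff, sub_eq_zero, Set.mem_image, Finset.mem_coe,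
    eq_comm (a := t)]

section DepressedQuartic

variable {K : Type*} [Field K] [CharZero K]

theorem vieta_depressed_quartic {a b c : K} {x : Fin 4 → K}
    (hf : ∀ t : K, t ^ 4 + a * t ^ 2 + b * t + c = ∏ k : Fin 4, (t - x k)) :
    x 0 + x 1 + x 2 + x 3 = 0 ∧
      a = x 0 * x 1 + x 0 * x 2 + x 0 * x 3 + x 1 * x 2 + x 1 * x 3 + x 2 * x 3 ∧
      b = -(x 0 * x 1 * x 2 + x 0 * x 1 * x 3 + x 0 * x 2 * x 3 + x 1 * x 2 * x 3) ∧
      c = x 0 * x 1 * x 2 * x 3 := by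
  simp only [Fin.prod_univ_four] at hf
  -- the values at `t = 0, ±1, ±2` already determine the coefficients
  refine ⟨?_, ?_, ?_, ?_⟩
  · linear_combination (hf 2 - hf (-2) - 2 * (hf 1 - hf (-1))) / 12
  · linear_combination (hf 1 + hf (-1)) / 2 - hf 0
  · linear_combination (8 * (hf 1 - hf (-1)) - (hf 2 - hf (-2))) / 12
  · linear_combination hf 0

theorem depressed_quartic_resolvent_eq_prod_pair_sums {a b c : K} {x : Fin 4 → K}
    (hf : ∀ t : K, t ^ 4 + a * t ^ 2 + b * t + c = ∏ k : Fin 4, (t - x k)) (t : K) :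
    t ^ 6 + 8 * a * t ^ 4 + 16 * (a ^ 2 - 4 * c) * t ^ 2 - 64 * b ^ 2
      = ∏ p ∈ Finset.univ.filter (fun p : Fin 4 × Fin 4 => p.1 < p.2), (t - 2 * (x p.1 + x p.2)) := by
  obtain ⟨hsum, rfl, rfl, rfl⟩ := vieta_depressed_quartic hf
  rw [prod_sub_two_mul_pair_sums x hsum, show x 3 = -(x 0 + x 1 + x 2) by linear_combination hsum]
  ring

end DepressedQuartic

/-- If `f(x) = x^4 + a x^2 + b x + c` has four real roots `x 0, ..., x 3`, then the
real roots of `g(x) = x^6 + 8 a x^4 + 16 (a^2 - 4 c) x^2 - 64 b^2` are exactly the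
numbers `2 (x i + x j)` over unordered pairs `{i, j}` of distinct indices; in
particular all six roots of `g` are real. -/
theorem stmt_1 (a b c : ℝ) (x : Fin 4 → ℝ)
    (hf : ∀ t : ℝ, t ^ 4 + a * t ^ 2 + b * t + c = ∏ k : Fin 4, (t - x k)) :
    (∀ t : ℝ, t ^ 6 + 8 * a * t ^ 4 + 16 * (a ^ 2 - 4 * c) * t ^ 2 - 64 * b ^ 2
        = ∏ p ∈ Finset.univ.filter (fun p : Fin 4 × Fin 4 => p.1 < p.2),
            (t - 2 * (x p.1 + x p.2))) ∧
    {t : ℝ | t ^ 6 + 8 * a * t ^ 4 + 16 * (a ^ 2 - 4 * c) * t ^ 2 - 64 * b ^ 2 = 0}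
      = {t : ℝ | ∃ i j : Fin 4, i < j ∧ t = 2 * (x i + x j)} := by
  have hg := depressed_quartic_resolvent_eq_prod_pair_sums hf
  refine ⟨hg, ?_⟩
  simp_rw [hg, setOf_prod_sub_eq_zero]
  ext t
  simp [eq_comm]
end

section
/- Let f(x) = x^4 + a x^2 + b x + c be a real quartic with all roots real, exactly two of which are positive (and two negative). Then the sum of the absolute values of the roots of f equals the largest real root of g(x) = x^6 + 8a x^4 + 16(a^2 - 4c) x^2 - 64 b^2. -/
/-!
Since the cubic coefficient vanishes, `x1 + x2 + x3 + x4 = 0`, and with this relation the sextic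
factors as `g(t) = (t² - u²)(t² - v²)(t² - w²)` with `u = x1 + x2 - x3 - x4`,
`v = x1 + x3 - x2 - x4`, `w = x1 + x4 - x2 - x3`. By the triangle inequality every real root of `g`
is at most `|x1| + |x2| + |x3| + |x4|`, and for the sign pattern `x1, x2 > 0 > x3, x4` this bound
is `u` itself, which is a root.
-/

section DepressedQuartic

variable {a b c x1 x2 x3 x4 : ℝ}

theorem depressed_quartic_vieta
    (hf : ∀ t : ℝ, t ^ 4 + a * t ^ 2 + b * t + c
        = (t - x1) * (t - x2) * (t - x3) * (t - x4)) :
    x1 + x2 + x3 + x4 = 0 ∧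
      a = x1 * x2 + x1 * x3 + x1 * x4 + x2 * x3 + x2 * x4 + x3 * x4 ∧
      b = -(x1 * x2 * x3 + x1 * x2 * x4 + x1 * x3 * x4 + x2 * x3 * x4) ∧
      c = x1 * x2 * x3 * x4 := by
  refine ⟨?_, ?_, ?_, ?_⟩
  · linear_combination (hf 2) / 12 - (hf (-2)) / 12 - (hf 1) / 6 + (hf (-1)) / 6
  · linear_combination (hf 1) / 2 + (hf (-1)) / 2 - hf 0
  · linear_combination (2 / 3 : ℝ) * hf 1 - (2 / 3 : ℝ) * hf (-1) - (hf 2) / 12 + (hf (-2)) / 12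
  · linear_combination hf 0

theorem sextic_resolvent_eq_prod
    (hf : ∀ t : ℝ, t ^ 4 + a * t ^ 2 + b * t + c
        = (t - x1) * (t - x2) * (t - x3) * (t - x4)) (t : ℝ) :
    t ^ 6 + 8 * a * t ^ 4 + 16 * (a ^ 2 - 4 * c) * t ^ 2 - 64 * b ^ 2
      = (t ^ 2 - (x1 + x2 - x3 - x4) ^ 2) * (t ^ 2 - (x1 + x3 - x2 - x4) ^ 2)
        * (t ^ 2 - (x1 + x4 - x2 - x3) ^ 2) := by
  obtain ⟨hsum, rfl, rfl, rfl⟩ := depressed_quartic_vieta hf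
  obtain rfl : x4 = -x1 - x2 - x3 := by linarith
  ring

end DepressedQuartic

theorem abs_add_sub_sub_le_sum_abs (x1 x2 x3 x4 : ℝ) :
    |x1 + x2 - x3 - x4| ≤ |x1| + |x2| + |x3| + |x4| := by
  calc |x1 + x2 - x3 - x4| ≤ |x1 + x2 - x3| + |x4| := abs_sub _ _
    _ ≤ |x1 + x2| + |x3| + |x4| := by gcongr; exact abs_sub _ _
    _ ≤ |x1| + |x2| + |x3| + |x4| := by gcongr; exact abs_add_le _ _

theorem le_of_sq_sub_sq_mul_eq_zero {t u v w : ℝ}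
    (h : (t ^ 2 - u ^ 2) * (t ^ 2 - v ^ 2) * (t ^ 2 - w ^ 2) = 0) :
    t ≤ max |u| (max |v| |w|) := by
  have key : ∀ s : ℝ, t ^ 2 - s ^ 2 = 0 → t ≤ |s| := fun s hs =>
    (le_abs_self t).trans (sq_eq_sq_iff_abs_eq_abs t s |>.mp (sub_eq_zero.mp hs)).le
  rcases mul_eq_zero.mp h with h | hw
  · rcases mul_eq_zero.mp h with hu | hv
    · exact le_max_of_le_left (key u hu)
    · exact le_max_of_le_right (le_max_of_le_left (key v hv))
  · exact le_max_of_le_right (le_max_of_le_right (key w hw))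

/-- If `f(x) = x^4 + a x^2 + b x + c` has four real roots, exactly two positive and
two negative (`x1 ≥ x2 > 0 > x3 ≥ x4`), then the sum of the absolute values of the
roots of `f` equals the largest real root of
`g(x) = x^6 + 8 a x^4 + 16 (a^2 - 4 c) x^2 - 64 b^2`. -/
theorem stmt_2 (a b c x1 x2 x3 x4 : ℝ)
    (hf : ∀ t : ℝ, t ^ 4 + a * t ^ 2 + b * t + c
        = (t - x1) * (t - x2) * (t - x3) * (t - x4))
    (h12 : x1 ≥ x2) (h2 : x2 > 0) (h3 : 0 > x3) (h34 : x3 ≥ x4) :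
    IsGreatest {t : ℝ | t ^ 6 + 8 * a * t ^ 4 + 16 * (a ^ 2 - 4 * c) * t ^ 2
        - 64 * b ^ 2 = 0} (|x1| + |x2| + |x3| + |x4|) := by
  have henergy : |x1| + |x2| + |x3| + |x4| = x1 + x2 - x3 - x4 := by
    rw [abs_of_pos (h2.trans_le h12), abs_of_pos h2, abs_of_neg h3, abs_of_neg (h34.trans_lt h3)]
    ring
  refine ⟨?_, fun t ht => ?_⟩
  · rw [Set.mem_ofPred_eq, sextic_resolvent_eq_prod hf, henergy]
    ring
  · rw [Set.mem_ofPred_eq, sextic_resolvent_eq_prod hf] at ht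
    refine (le_of_sq_sub_sq_mul_eq_zero ht).trans (max_le ?_ (max_le ?_ ?_))
    · exact abs_add_sub_sub_le_sum_abs x1 x2 x3 x4
    · linarith [abs_add_sub_sub_le_sum_abs x1 x3 x2 x4]
    · linarith [abs_add_sub_sub_le_sum_abs x1 x4 x2 x3]
end

section
/- For integers n and i with 2 ≤ i ≤ n - 5, the largest root of the quadratic x^2 - (n - i - 1)x - i(n - i) is strictly greater than n - i + 0.67. -/
/-!
Writing `m = n - i`, the value of the quadratic at `m + 0.67` is `1.1189 - (i - 1.67) m`, which is
negative once `i ≥ 2` and `m ≥ 4`. A monic quadratic that is negative at `t` has a root above `t`.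
-/

lemma exists_root_gt_of_quadratic_neg {b c t : ℝ} (ht : t ^ 2 - b * t - c < 0) :
    ∃ x, t < x ∧ x ^ 2 - b * x - c = 0 := by
  have hdisc : (2 * t - b) ^ 2 < b ^ 2 + 4 * c := by linarith
  set s := √(b ^ 2 + 4 * c)
  have hs : s ^ 2 = b ^ 2 + 4 * c := Real.sq_sqrt (by nlinarith)
  refine ⟨(b + s) / 2, ?_, ?_⟩
  · linarith [Real.lt_sqrt_of_sq_lt hdisc]
  · linear_combination hs / 4

lemma quadratic_neg_at_shift (m i : ℝ) (hi : 2 ≤ i) (hm : 4 ≤ m) :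
    (m + 0.67) ^ 2 - (m - 1) * (m + 0.67) - i * m < 0 := by
  nlinarith [mul_le_mul hi hm (by norm_num) (by linarith)]

/-- For integers `2 ≤ i ≤ n - 5`, the largest root of
`x^2 - (n - i - 1) x - i (n - i)` is strictly greater than `n - i + 0.67`. -/
theorem stmt_3 (n i : ℤ) (hi : 2 ≤ i) (hin : i ≤ n - 5) (r : ℝ)
    (hr : IsGreatest {x : ℝ |
        x ^ 2 - ((n : ℝ) - (i : ℝ) - 1) * x - (i : ℝ) * ((n : ℝ) - (i : ℝ)) = 0} r) :
    r > (n : ℝ) - (i : ℝ) + 0.67 := by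
  have hi' : (2 : ℝ) ≤ i := by exact_mod_cast hi
  have hm : (4 : ℝ) ≤ n - i := by
    have : (i : ℝ) ≤ n - 5 := by exact_mod_cast hin
    linarith
  have hneg := quadratic_neg_at_shift _ _ hi' hm
  obtain ⟨x, hx, hroot⟩ := exists_root_gt_of_quadratic_neg hneg
  exact hx.trans_le (hr.2 hroot)
end

section
/- For every real n ≥ 8, the largest real root of g(x) = x^4 - (5n - 17)x^2 - 8(2n - 9)x - 6(2n - 10) is strictly greater than sqrt(5n - 7). -/
/-! With `s = √(5n - 7)` we get `g(s) = 38n - 10 - 8(2n - 9)s`, which is negative since `s > 11/2`,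
while `g(n) > 0`. So `g` has a root in `(s, n]`, and the largest root lies beyond it. -/

open Set

theorem lt_of_mem_upperBounds_preimage {α δ : Type*} [ConditionallyCompleteLinearOrder α]
    [TopologicalSpace α] [OrderTopology α] [DenselyOrdered α] [LinearOrder δ] [TopologicalSpace δ]
    [OrderClosedTopology δ] {f : α → δ} {a b r : α} {c : δ} (hab : a ≤ b)
    (hf : ContinuousOn f (Icc a b)) (ha : f a < c) (hb : c ≤ f b)
    (hr : r ∈ upperBounds {x | f x = c}) : a < r := by
  obtain ⟨x, ⟨hax, -⟩, hfx⟩ := intermediate_value_Ioc hab hf ⟨ha, hb⟩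
  exact hax.trans_le (hr hfx)

def quotientCharPoly (n x : ℝ) : ℝ :=
  x ^ 4 - (5 * n - 17) * x ^ 2 - 8 * (2 * n - 9) * x - 6 * (2 * n - 10)

theorem continuous_quotientCharPoly (n : ℝ) : Continuous (quotientCharPoly n) := by
  unfold quotientCharPoly
  fun_prop

theorem quotientCharPoly_sqrt_neg {n : ℝ} (hn : 8 ≤ n) :
    quotientCharPoly n (Real.sqrt (5 * n - 7)) < 0 := by
  set s := Real.sqrt (5 * n - 7)
  have hs_sq : s ^ 2 = 5 * n - 7 := Real.sq_sqrt (by linarith)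
  have hs_gt : 11 / 2 < s := (Real.lt_sqrt (by norm_num)).2 (by linarith)
  have hg : quotientCharPoly n s = 38 * n - 10 - 8 * (2 * n - 9) * s := by
    unfold quotientCharPoly
    rw [show s ^ 4 = (s ^ 2) ^ 2 by ring, hs_sq]
    ring
  rw [hg]
  nlinarith [mul_lt_mul_of_pos_left hs_gt (show (0 : ℝ) < 2 * n - 9 by linarith)]

theorem quotientCharPoly_self_pos {n : ℝ} (hn : 8 ≤ n) : 0 < quotientCharPoly n n := by
  have hg : quotientCharPoly n n = n ^ 3 * (n - 5) + n ^ 2 + 60 * n + 60 := by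
    unfold quotientCharPoly
    ring
  rw [hg]
  have : 0 < n ^ 3 * (n - 5) := mul_pos (by positivity) (by linarith)
  nlinarith

theorem sqrt_le_self_of_eight_le {n : ℝ} (hn : 8 ≤ n) : Real.sqrt (5 * n - 7) ≤ n :=
  (Real.sqrt_le_left (by linarith)).2 (by nlinarith)

/-- For every real `n ≥ 8`, the largest real root of
`g(x) = x^4 - (5n-17) x^2 - 8(2n-9) x - 6(2n-10)` exceeds `sqrt (5n - 7)`. -/
theorem stmt_11 (n : ℝ) (hn : 8 ≤ n) (r : ℝ)
    (hr : IsGreatest {x : ℝ |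
        x ^ 4 - (5 * n - 17) * x ^ 2 - 8 * (2 * n - 9) * x - 6 * (2 * n - 10) = 0} r) :
    r > Real.sqrt (5 * n - 7) :=
  lt_of_mem_upperBounds_preimage (f := quotientCharPoly n) (sqrt_le_self_of_eight_le hn)
    (continuous_quotientCharPoly n).continuousOn (quotientCharPoly_sqrt_neg hn)
    (quotientCharPoly_self_pos hn).le hr.2
end

section
/- For every real t ≥ 1, the largest real root of h1(x) = x^3 + 4x^2 - (12t - 4)x - 16t is strictly smaller than the largest real root of g(x) = x^3 - 4(3t + 2)x - 32t. -/
/-!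
Since `g` is a monic cubic, it is positive to the right of its largest root `r₂`, so `g ≥ 0`
on `[r₂, ∞)`. But `h₁ - g = 4x² + 12x + 16t = 4(x + 3/2)² + 16t - 9 > 0` for `t ≥ 1`, hence
`h₁ > 0` on `[r₂, ∞)` and every root of `h₁` lies strictly to the left of `r₂`.
-/

open Filter Polynomial

theorem tendsto_monic_cubic_atTop (a b c : ℝ) :
    Tendsto (fun x : ℝ => x ^ 3 + a * x ^ 2 + b * x + c) atTop atTop := by
  have hdeg : (X ^ 3 + C a * X ^ 2 + C b * X + C c).degree = 3 := by compute_degree!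
  have hmonic : (X ^ 3 + C a * X ^ 2 + C b * X + C c).Monic := by monicity!
  have h := tendsto_atTop_of_leadingCoeff_nonneg _ (by rw [hdeg]; norm_num)
    (hmonic.leadingCoeff ▸ zero_le_one)
  simpa only [eval_add, eval_mul, eval_pow, eval_C, eval_X] using h

theorem pos_of_upperBounds_zeros_of_lt {f : ℝ → ℝ} (hf : Continuous f)
    (htop : Tendsto f atTop atTop) {r : ℝ} (hr : r ∈ upperBounds {x | f x = 0}) {x : ℝ}
    (hx : r < x) : 0 < f x := by
  by_contra! hfx
  obtain ⟨y, hfy, hxy⟩ := ((htop.eventually_ge_atTop 0).and (eventually_ge_atTop x)).exists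
  obtain ⟨z, hz, hfz⟩ := intermediate_value_Icc hxy hf.continuousOn ⟨hfx, hfy⟩
  exact (hx.trans_le hz.1).not_ge (hr hfz)

/-- For real `t ≥ 1`, the largest real root of `h1(x) = x^3 + 4x^2 - (12t-4)x - 16t`
is strictly smaller than the largest real root of `g(x) = x^3 - 4(3t+2)x - 32t`. -/
theorem stmt_14 (t : ℝ) (ht : 1 ≤ t) (r1 r2 : ℝ)
    (hr1 : IsGreatest {x : ℝ |
        x ^ 3 + 4 * x ^ 2 - (12 * t - 4) * x - 16 * t = 0} r1)
    (hr2 : IsGreatest {x : ℝ | x ^ 3 - 4 * (3 * t + 2) * x - 32 * t = 0} r2) :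
    r1 < r2 := by
  set g : ℝ → ℝ := fun x => x ^ 3 - 4 * (3 * t + 2) * x - 32 * t
  have hg_top : Tendsto g atTop atTop := by
    convert tendsto_monic_cubic_atTop 0 (-4 * (3 * t + 2)) (-32 * t) using 2; ring
  have hg_pos : ∀ x, r2 < x → 0 < g x :=
    fun x => pos_of_upperBounds_zeros_of_lt (by fun_prop) hg_top hr2.2
  by_contra! hle
  have hg_r1 : 0 ≤ g r1 := by
    rcases hle.eq_or_lt with rfl | hlt
    · exact hr2.1.ge
    · exact (hg_pos r1 hlt).le
  have hh_r1 : r1 ^ 3 + 4 * r1 ^ 2 - (12 * t - 4) * r1 - 16 * t = 0 := hr1.1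
  nlinarith [sq_nonneg (r1 + 3 / 2)]
end

section
/- For all real t ≥ 2, let g(x) = x^3 - 4(4t + 3)x - 48t (the cubic from i = 3) and r(x) = -16((8t - 1)x^2 - 24t x - 80t^2). Then g(2√(4t+3)) = -48t < 0, hence the largest root τ(g) of g satisfies τ(g) > 2√(4t+3); moreover the unique positive root x0 of r satisfies x0 < 2√(4t+3), and r(τ(g)) < r(2√(4t+3)) < 0. -/
/-!
Write `s = √(4t+3)` and `q = -r/16 = (8t-1)x² - 24tx - 80t²`. Since `s² = 4t+3`, `g(2s) = -48t < 0`
while `g(4s) = 48(s³ - t) > 0`, so `g` has a root above `2s`. The upward parabola `q` has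
`q(0) < 0` and `q(2s) = 48t² + 80t - 12 - 48ts > 0` (square both sides; this needs `t ≥ 2`), so its
positive root lies below `2s`; and `2s` is right of the vertex of `q`, so `q(τ) > q(2s)`.
-/

lemma lt_of_isGreatest_setOf_eq_zero {f : ℝ → ℝ} (hf : Continuous f) {a b τ : ℝ} (hab : a ≤ b)
    (ha : f a < 0) (hb : 0 ≤ f b) (hτ : IsGreatest {x | f x = 0} τ) : a < τ := by
  obtain ⟨c, hc, hfc⟩ := intermediate_value_Ioc hab hf.continuousOn ⟨ha, hb⟩
  exact hc.1.trans_le (hτ.2 hfc)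

lemma lt_of_quadratic_root {A B C x₀ a : ℝ} (hA : 0 ≤ A) (hC : 0 ≤ C) (ha : 0 ≤ a) (hx₀ : 0 < x₀)
    (hroot : A * x₀ ^ 2 - B * x₀ - C = 0) (hpos : 0 < A * a ^ 2 - B * a - C) : x₀ < a := by
  by_contra! hle
  -- `x₀ q(a) - a q(x₀) = (a - x₀)(A a x₀ + C)`
  have : (a - x₀) * (A * a * x₀ + C) ≤ 0 :=
    mul_nonpos_of_nonpos_of_nonneg (by linarith) (by positivity)
  nlinarith [mul_pos hx₀ hpos]

lemma quadratic_lt_of_vertex_le {A B a b : ℝ} (hA : 0 < A) (hvert : B ≤ 2 * A * a) (hab : a < b) :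
    A * a ^ 2 - B * a < A * b ^ 2 - B * b := by
  have : 0 < (b - a) * (A * (a + b) - B) := mul_pos (by linarith) (by nlinarith)
  linarith

lemma mul_sqrt_lt_of_two_le {t : ℝ} (ht : 2 ≤ t) :
    48 * t * √(4 * t + 3) < 48 * t ^ 2 + 80 * t - 12 := by
  have hs2 : √(4 * t + 3) ^ 2 = 4 * t + 3 := Real.sq_sqrt (by linarith)
  refine lt_of_pow_lt_pow_left₀ 2 (by nlinarith) ?_
  rw [mul_pow, hs2]
  nlinarith [mul_nonneg (sub_nonneg.2 ht) (sq_nonneg t), sq_nonneg (t - 2)]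

/-- Key estimates in Case 2 (`i = 3`) of Lemma 4.3, for real `t ≥ 2`, with
`g(x) = x^3 - 4(4t+3)x - 48t` and `r(x) = -16((8t-1)x^2 - 24t x - 80t^2)`. -/
theorem stmt_16 (t : ℝ) (ht : 2 ≤ t) (tau x0 : ℝ)
    (htau : IsGreatest {x : ℝ | x ^ 3 - 4 * (4 * t + 3) * x - 48 * t = 0} tau)
    (hx0pos : 0 < x0)
    (hx0 : -16 * ((8 * t - 1) * x0 ^ 2 - 24 * t * x0 - 80 * t ^ 2) = 0) :
    (2 * Real.sqrt (4 * t + 3)) ^ 3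
        - 4 * (4 * t + 3) * (2 * Real.sqrt (4 * t + 3)) - 48 * t = -48 * t
    ∧ -48 * t < 0
    ∧ tau > 2 * Real.sqrt (4 * t + 3)
    ∧ x0 < 2 * Real.sqrt (4 * t + 3)
    ∧ -16 * ((8 * t - 1) * tau ^ 2 - 24 * t * tau - 80 * t ^ 2)
        < -16 * ((8 * t - 1) * (2 * Real.sqrt (4 * t + 3)) ^ 2
            - 24 * t * (2 * Real.sqrt (4 * t + 3)) - 80 * t ^ 2)
    ∧ -16 * ((8 * t - 1) * (2 * Real.sqrt (4 * t + 3)) ^ 2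
        - 24 * t * (2 * Real.sqrt (4 * t + 3)) - 80 * t ^ 2) < 0 := by
  have hs2 : √(4 * t + 3) ^ 2 = 4 * t + 3 := Real.sq_sqrt (by linarith)
  set s := √(4 * t + 3)
  have hs : 3 < s := by nlinarith [Real.sqrt_nonneg (4 * t + 3)]
  have hg : (2 * s) ^ 3 - 4 * (4 * t + 3) * (2 * s) - 48 * t = -48 * t := by
    linear_combination 8 * s * hs2
  have hq : 0 < (8 * t - 1) * (2 * s) ^ 2 - 24 * t * (2 * s) - 80 * t ^ 2 := by
    nlinarith [mul_sqrt_lt_of_two_le ht]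
  have hτ : 2 * s < tau :=
    lt_of_isGreatest_setOf_eq_zero (b := 4 * s) (by fun_prop) (by linarith) (by linarith)
      (by nlinarith) htau
  refine ⟨hg, by linarith, hτ, lt_of_quadratic_root (by linarith) (by positivity) (by linarith)
    hx0pos (by linarith) hq, ?_, by linarith⟩
  have := quadratic_lt_of_vertex_le (A := 8 * t - 1) (B := 24 * t) (by linarith) (by nlinarith) hτ
  linarith
end

section
/- Let G be a graph with Perron unit vector x, and let e = uv be an edge of G with x_u^2 + x_v^2 ≤ a. If λ2(G - e) > a, then E(G - e) ≥ 2(λ1(G - e) + λ2(G - e)) > 2λ1(G). -/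
open Matrix in
lemma aux_trace_eq {n : ℕ} {B : Matrix (Fin n) (Fin n) ℝ} (hBh : B.IsHermitian) :
    ∑ i, hBh.eigenvalues i = B.trace := by
  conv_rhs => rw [hBh.spectral_theorem, Unitary.conjStarAlgAut_apply]
  rw [Matrix.trace_mul_cycle]
  have h1 : (star (hBh.eigenvectorUnitary : Matrix (Fin n) (Fin n) ℝ)) *
      (hBh.eigenvectorUnitary : Matrix (Fin n) (Fin n) ℝ) = 1 := by
    exact Matrix.mem_unitaryGroup_iff'.mp (hBh.eigenvectorUnitary).2
  rw [h1, Matrix.one_mul, Matrix.trace_diagonal]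
  simp

open Matrix in
lemma aux_rayleigh {n : ℕ} {B : Matrix (Fin n) (Fin n) ℝ} (hBh : B.IsHermitian)
    {μ : ℝ} (hμ : ∀ i, hBh.eigenvalues i ≤ μ) (x : Fin n → ℝ) :
    x ⬝ᵥ B.mulVec x ≤ μ * (x ⬝ᵥ x) := by
  set U : Matrix (Fin n) (Fin n) ℝ := (hBh.eigenvectorUnitary : Matrix (Fin n) (Fin n) ℝ) with hU
  have hstar : star U = Uᵀ := by
    rw [Matrix.star_eq_conjTranspose, Matrix.conjTranspose_eq_transpose_of_trivial]
  have hUU : U * Uᵀ = 1 := by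
    rw [← hstar]; exact Matrix.mem_unitaryGroup_iff.mp (hBh.eigenvectorUnitary).2
  set w : Fin n → ℝ := Uᵀ *ᵥ x with hw
  have hvec : x ᵥ* U = w := by rw [hw, ← Matrix.mulVec_transpose]
  have h1 : x ⬝ᵥ B.mulVec x = ∑ i, hBh.eigenvalues i * w i ^ 2 := by
    conv_lhs => rw [hBh.spectral_theorem, Unitary.conjStarAlgAut_apply]
    rw [hstar, ← Matrix.mulVec_mulVec, ← Matrix.mulVec_mulVec, Matrix.dotProduct_mulVec, hvec,
      ← hw]
    simp [Matrix.mulVec_diagonal, dotProduct]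
    exact Finset.sum_congr rfl fun i _ => by ring
  have h2 : x ⬝ᵥ x = ∑ i, w i ^ 2 := by
    have : x ⬝ᵥ x = w ⬝ᵥ w := by
      rw [hw, Matrix.dotProduct_mulVec, Matrix.mulVec_transpose, Matrix.vecMul_vecMul,
        hUU, Matrix.vecMul_one]
    rw [this, dotProduct]
    exact Finset.sum_congr rfl fun i _ => (sq (w i)).symm
  rw [h1, h2, Finset.mul_sum]
  exact Finset.sum_le_sum fun i _ => mul_le_mul_of_nonneg_right (hμ i) (sq_nonneg _)



/-- Lemma 2.3 (concrete form). Let `G` be a graph on `Fin n` with adjacency matrix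
`A`, let `e = uv` be an edge, and let `B = A - C` be the adjacency matrix of `G - e`,
where `C` has `1` in positions `(u,v)` and `(v,u)` and `0` elsewhere. If `x` is the
unit Perron eigenvector of `A` for its largest eigenvalue `lam1A`, with
`x_u^2 + x_v^2 ≤ a`, and the second largest eigenvalue `lam2B` of `B` satisfies
`lam2B > a`, then the energy of `G - e` (sum of absolute values of eigenvalues of
`B`) is at least `2 (lam1B + lam2B)`, which is strictly greater than `2 lam1A`. -/
theorem stmt_19 (n : ℕ) (G : SimpleGraph (Fin n)) [DecidableRel G.Adj]
    (u v : Fin n) (huv : G.Adj u v) (a : ℝ)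
    (A B C : Matrix (Fin n) (Fin n) ℝ)
    (hA : A = G.adjMatrix ℝ)
    (hC : C = fun i j => if (i = u ∧ j = v) ∨ (i = v ∧ j = u) then 1 else 0)
    (hB : B = A - C)
    (hAh : A.IsHermitian) (hBh : B.IsHermitian)
    (lam1A lam1B lam2B : ℝ)
    (hlam1A : IsGreatest (Set.range hAh.eigenvalues) lam1A)
    (hlam1B : IsGreatest (Set.range hBh.eigenvalues) lam1B)
    (hlam2B : ∃ i0 : Fin n, hBh.eigenvalues i0 = lam1B ∧
        IsGreatest (Set.range fun j : {j : Fin n // j ≠ i0} => hBh.eigenvalues j) lam2B)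
    (x : Fin n → ℝ)
    (hxunit : ∑ i, x i ^ 2 = 1)
    (hxpos : ∀ i, 0 < x i)
    (hxeig : A.mulVec x = lam1A • x)
    (hedge : x u ^ 2 + x v ^ 2 ≤ a)
    (ha : lam2B > a) :
    (∑ i, |hBh.eigenvalues i|) ≥ 2 * (lam1B + lam2B)
      ∧ 2 * (lam1B + lam2B) > 2 * lam1A := by
  have hune : u ≠ v := huv.ne
  obtain ⟨i0, hi0, hg2⟩ := hlam2B
  obtain ⟨j, hj⟩ := hg2.1
  -- lam2B bounds
  have hxupos := hxpos u
  have hxvpos := hxpos v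
  have hapos : (0:ℝ) < a := lt_of_lt_of_le (by positivity) hedge
  have hlam2pos : 0 < lam2B := hapos.trans ha
  have h12 : lam2B ≤ lam1B := hj ▸ hlam1B.2 ⟨j, rfl⟩
  have hlam1pos : 0 < lam1B := lt_of_lt_of_le hlam2pos h12
  -- trace of B is zero, so eigenvalues sum to zero
  have htr : ∑ i, hBh.eigenvalues i = 0 := by
    rw [aux_trace_eq hBh, hB, hA, hC]
    unfold Matrix.trace
    simp only [Matrix.diag, SimpleGraph.adjMatrix_apply, Pi.sub_apply, Matrix.sub_apply]
    have : ∀ i : Fin n, ((if G.Adj i i then (1:ℝ) else 0) -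
        (if (i = u ∧ i = v) ∨ (i = v ∧ i = u) then (1:ℝ) else 0)) = 0 := by
      intro i
      rw [if_neg (G.irrefl), if_neg, sub_zero]
      rintro (⟨rfl, rfl⟩ | ⟨rfl, rfl⟩) <;> exact hune rfl
    exact Finset.sum_eq_zero fun i _ => this i
  constructor
  · -- energy bound
    have key : ∑ i, |hBh.eigenvalues i| = ∑ i, (|hBh.eigenvalues i| + hBh.eigenvalues i) := by
      rw [Finset.sum_add_distrib, htr, add_zero]
    rw [key]
    have hsub : ({i0, (j:Fin n)} : Finset (Fin n)) ⊆ Finset.univ := Finset.subset_univ _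
    have hne : i0 ≠ (j:Fin n) := fun h => j.2 h.symm
    calc ∑ i, (|hBh.eigenvalues i| + hBh.eigenvalues i)
        ≥ ∑ i ∈ ({i0, (j:Fin n)} : Finset (Fin n)), (|hBh.eigenvalues i| + hBh.eigenvalues i) :=
          Finset.sum_le_sum_of_subset_of_nonneg hsub
            (fun i _ _ => by linarith [neg_abs_le (hBh.eigenvalues i)])
      _ = (|hBh.eigenvalues i0| + hBh.eigenvalues i0) +
            (|hBh.eigenvalues j| + hBh.eigenvalues j) := Finset.sum_pair hne
      _ = 2 * (lam1B + lam2B) := by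
          have hj' : hBh.eigenvalues (j : Fin n) = lam2B := hj
          rw [hi0, hj', abs_of_pos hlam1pos, abs_of_pos hlam2pos]; ring
  · -- strict inequality
    have hxx : dotProduct x x = 1 := by
      rw [← hxunit]
      exact Finset.sum_congr rfl fun i _ => (sq (x i)).symm
    have hAx : dotProduct x (A.mulVec x) = lam1A := by
      rw [hxeig, dotProduct_smul, hxx, smul_eq_mul, mul_one]
    have hCx : dotProduct x (C.mulVec x) = 2 * (x u * x v) := by
      have hmv : ∀ i, C.mulVec x i
          = (if i = u then x v else 0) + (if i = v then x u else 0) := by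
        intro i
        rw [hC]
        simp only [Matrix.mulVec, dotProduct]
        rcases eq_or_ne i u with rfl | hiu
        · simp [hune, hune.symm, Finset.sum_ite_eq' Finset.univ v]
        · rcases eq_or_ne i v with rfl | hiv
          · simp [hune, hune.symm, hiu, Finset.sum_ite_eq' Finset.univ u]
          · simp [hiu, hiv]
      show ∑ i, x i * C.mulVec x i = _
      simp only [hmv]
      rw [show ∀ f g : Fin n → ℝ, ∑ i, x i * (f i + g i) = ∑ i, x i * f i + ∑ i, x i * g i from
        fun f g => by rw [← Finset.sum_add_distrib]; exact Finset.sum_congr rfl fun i _ => by ring]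
      simp [Finset.sum_ite_eq' Finset.univ u, Finset.sum_ite_eq' Finset.univ v, mul_ite]
      ring
    have hBx : dotProduct x (B.mulVec x) = lam1A - 2 * (x u * x v) := by
      rw [hB, Matrix.sub_mulVec, dotProduct_sub, hAx, hCx]
    have hray : dotProduct x (B.mulVec x) ≤ lam1B * 1 := by
      have := aux_rayleigh hBh (fun i => hlam1B.2 ⟨i, rfl⟩) x
      rwa [hxx] at this
    have htwo : 2 * (x u * x v) ≤ a := by
      nlinarith [sq_nonneg (x u - x v)]
    nlinarith
end
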